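/- Let Γ be a finite simple connected graph with vertex set V and let k ≥ 1. Then Γ admits a proper colouring with k colours if and only if there exists a function c : V → ℂ, not identically zero, such that for every edge {u, v} of Γ one has Σ_{l=1}^{k} c(u)^{k−l} c(v)^{l−1} = 0. -/

import Mathlib

/-!
Writing the edge sum as `∑_{i<k} x^i y^(k-1-i)`, it is `(x^k - y^k)/(x - y)` off the diagonal and
`k x^(k-1)` on it. Hence, for `x ≠ 0`, it vanishes exactly when `x ≠ y` and `x^k = y^k`.
A proper colouring by `Fin k` therefore gives weights `ζ^(colour)` for a primitive `k`-th root of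
unity `ζ`. Conversely, vanishing on every edge makes `c^k` constant along edges, hence constant
on the connected graph and nonzero there; so `c` takes its values among the at most `k` roots of
a single polynomial `X^k - a`, and adjacent vertices get different values: `c` is a proper
colouring with at most `k` colours.
-/

open Finset Polynomial

theorem sum_Icc_pow_mul_pow_eq_geom_sum₂ {R : Type*} [CommSemiring R] (k : ℕ) (x y : R) :
    ∑ l ∈ Icc 1 k, x ^ (k - l) * y ^ (l - 1) = ∑ i ∈ range k, x ^ i * y ^ (k - 1 - i) := by
  rw [← Ico_add_one_right_eq_Icc, sum_Ico_eq_sum_range, ← geom_sum₂_comm]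
  refine sum_congr rfl fun i hi => ?_
  have hik : i < k := mem_range.1 hi
  rw [mul_comm, Nat.add_sub_cancel_left, Nat.sub_add_eq, Nat.sub_right_comm]

section GeomSum

variable {R : Type*} [CommRing R] {x y : R} {n : ℕ}

theorem pow_eq_pow_of_geom_sum₂_eq_zero (h : ∑ i ∈ range n, x ^ i * y ^ (n - 1 - i) = 0) :
    x ^ n = y ^ n := by
  rw [← sub_eq_zero, ← geom_sum₂_mul, h, zero_mul]

variable [IsDomain R]

theorem geom_sum₂_eq_zero_of_ne_of_pow_eq (hne : x ≠ y) (h : x ^ n = y ^ n) :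
    ∑ i ∈ range n, x ^ i * y ^ (n - 1 - i) = 0 := by
  have hmul := geom_sum₂_mul x y n
  rw [h, sub_self, mul_eq_zero] at hmul
  exact hmul.resolve_right (sub_ne_zero.2 hne)

theorem ne_of_geom_sum₂_eq_zero [CharZero R] (hn : n ≠ 0) (hx : x ≠ 0)
    (h : ∑ i ∈ range n, x ^ i * y ^ (n - 1 - i) = 0) : x ≠ y := by
  rintro rfl
  rw [geom_sum₂_self, mul_eq_zero, Nat.cast_eq_zero] at h
  exact h.elim hn (pow_ne_zero _ hx)

theorem IsPrimitiveRoot.geom_sum₂_pow_eq_zero {ζ : R} (hζ : IsPrimitiveRoot ζ n) {a b : ℕ}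
    (ha : a < n) (hb : b < n) (hab : a ≠ b) :
    ∑ i ∈ range n, (ζ ^ a) ^ i * (ζ ^ b) ^ (n - 1 - i) = 0 :=
  geom_sum₂_eq_zero_of_ne_of_pow_eq (fun h => hab (hζ.pow_inj ha hb h))
    (by rw [pow_right_comm, hζ.pow_eq_one, one_pow, pow_right_comm, hζ.pow_eq_one, one_pow])

end GeomSum

namespace SimpleGraph

variable {V : Type*} {G : SimpleGraph V}

theorem Reachable.eq_of_forall_adj {β : Type*} {f : V → β}
    (hf : ∀ u v, G.Adj u v → f u = f v) {u v : V} (huv : G.Reachable u v) : f u = f v := by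
  obtain ⟨w⟩ := huv
  induction w with
  | nil => rfl
  | cons hadj _ ih => exact (hf _ _ hadj).trans ih

theorem colorable_of_forall_adj_ne {α : Type*} {s : Finset α} (f : V → α) (hs : ∀ v, f v ∈ s)
    (hf : ∀ u v, G.Adj u v → f u ≠ f v) : G.Colorable #s := by
  let C : G.Coloring s := ⟨fun v => ⟨f v, hs v⟩, fun huv h => hf _ _ huv (congrArg Subtype.val h)⟩
  simpa using C.colorable

variable {R : Type*} [CommRing R] [IsDomain R] {k : ℕ}

theorem Colorable.exists_geom_sum₂_eq_zero {ζ : R} (hζ : IsPrimitiveRoot ζ k)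
    (hG : G.Colorable k) :
    ∃ c : V → R, (∀ v, c v ≠ 0) ∧
      ∀ u v, G.Adj u v → ∑ i ∈ range k, c u ^ i * c v ^ (k - 1 - i) = 0 := by
  obtain ⟨C⟩ := hG
  refine ⟨fun v => ζ ^ (C v : ℕ), fun v => pow_ne_zero _ (hζ.ne_zero (C v).pos.ne'),
    fun u v huv => hζ.geom_sum₂_pow_eq_zero (C u).isLt (C v).isLt (Fin.val_ne_of_ne (C.valid huv))⟩

theorem Preconnected.colorable_of_geom_sum₂_eq_zero [CharZero R] (hG : G.Preconnected)
    (hk : k ≠ 0) {c : V → R} (hc : c ≠ 0)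
    (hS : ∀ u v, G.Adj u v → ∑ i ∈ range k, c u ^ i * c v ^ (k - 1 - i) = 0) :
    G.Colorable k := by
  obtain ⟨w, hw⟩ := Function.ne_iff.1 hc
  have hpow (v : V) : c v ^ k = c w ^ k :=
    ((hG w v).eq_of_forall_adj (f := (c · ^ k))
      fun u v huv => pow_eq_pow_of_geom_sum₂_eq_zero (hS u v huv)).symm
  have hne_zero (v : V) : c v ≠ 0 := fun h =>
    hw (pow_eq_zero_iff hk |>.1 (by rw [← hpow v, h, zero_pow hk]))
  have hroots (v : V) : c v ∈ nthRootsFinset k (c w ^ k) :=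
    (mem_nthRootsFinset (Nat.pos_of_ne_zero hk) _).2 (hpow v)
  refine (colorable_of_forall_adj_ne c hroots
    fun u v huv => ne_of_geom_sum₂_eq_zero hk (hne_zero u) (hS u v huv)).mono ?_
  classical
  rw [nthRootsFinset_def]
  exact (Multiset.toFinset_card_le _).trans (card_nthRoots k _)

end SimpleGraph

theorem colorable_iff_exists_nontrivial_complex_weights_of_connected_general
    {V : Type*} (Γ : SimpleGraph V) (hconn : Γ.Connected)
    (k : ℕ) (hk : 1 ≤ k) :
    Γ.Colorable k ↔
      ∃ c : V → ℂ, c ≠ 0 ∧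
        ∀ u v : V, Γ.Adj u v →
          ∑ l ∈ Finset.Icc 1 k, c u ^ (k - l) * c v ^ (l - 1) = 0 := by
  have hk0 : k ≠ 0 := Nat.one_le_iff_ne_zero.1 hk
  simp only [sum_Icc_pow_mul_pow_eq_geom_sum₂]
  constructor
  · intro hcol
    obtain ⟨c, hc0, hS⟩ := hcol.exists_geom_sum₂_eq_zero (Complex.isPrimitiveRoot_exp k hk0)
    exact ⟨c, fun h => hc0 hconn.nonempty.some (congrFun h _), hS⟩
  · rintro ⟨c, hc, hS⟩
    exact hconn.preconnected.colorable_of_geom_sum₂_eq_zero hk0 hc hS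

/-- A finite simple connected graph `Γ` is properly `k`-colourable (`k ≥ 1`) iff there is a
function `c : V → ℂ`, not identically zero, such that
`∑_{l=1}^{k} c(u)^{k-l} c(v)^{l-1} = 0` for every edge `{u, v}` of `Γ`. -/
theorem colorable_iff_exists_nontrivial_complex_weights_of_connected
    {V : Type*} [Fintype V] (Γ : SimpleGraph V) (hconn : Γ.Connected)
    (k : ℕ) (hk : 1 ≤ k) :
    Γ.Colorable k ↔
      ∃ c : V → ℂ, c ≠ 0 ∧
        ∀ u v : V, Γ.Adj u v →
          ∑ l ∈ Finset.Icc 1 k, c u ^ (k - l) * c v ^ (l - 1) = 0 :=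
  colorable_iff_exists_nontrivial_complex_weights_of_connected_general Γ hconn k hk
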